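/- (Double role delegation, graph level.) Let P1 and P2 be disjoint sets of vertices with c1 ∈ P1 and c2 ∈ P2, let S = S(P1, P2, c1, c2) be the binary star graph, let w ∈ P2 \ {c2}, and let v ∈ P1 \ {c1}. Define G̃ = τ_w(τ_{c1}(τ_w(S)) − c1) and H = τ_v(τ_{c2}(τ_v(G̃)) − c2). Then H is a binary star graph centered at v and w: its edges are exactly the pairs {v, u} with u ∈ (P1 \ {c1, v}) ∪ {w}, together with the pairs {w, z} with z ∈ P2 \ {c2, w}; equivalently, H = S(P1', P2', v, w) with P1' = {v} ∪ (P2 \ {c2, w}) and P2' = {w} ∪ (P1 \ {c1, v}). -/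

import Mathlib

open SimpleGraph

universe u

/-- Local complementation of `G` at vertex `i`: adjacency is toggled exactly among
pairs of neighbors of `i`. -/
def localComp {V : Type u} (G : SimpleGraph V) (i : V) : SimpleGraph V where
  Adj a b := a ≠ b ∧
    ((G.Adj i a ∧ G.Adj i b) ∧ ¬ G.Adj a b ∨ ¬(G.Adj i a ∧ G.Adj i b) ∧ G.Adj a b)
  symm := by
    constructor
    rintro a b ⟨hne, h⟩
    refine ⟨hne.symm, ?_⟩
    rcases h with ⟨⟨ha, hb⟩, hab⟩ | ⟨h1, h2⟩
    · exact Or.inl ⟨⟨hb, ha⟩, fun h => hab h.symm⟩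
    · exact Or.inr ⟨fun h => h1 ⟨h.2, h.1⟩, h2.symm⟩
  loopless := ⟨fun a h => h.1 rfl⟩

/-- Vertex deletion `G − i`: remove every edge incident to `i` (the vertex stays,
isolated). -/
def delVert {V : Type u} (G : SimpleGraph V) (i : V) : SimpleGraph V where
  Adj a b := G.Adj a b ∧ a ≠ i ∧ b ≠ i
  symm := ⟨fun _ _ ⟨h, ha, hb⟩ => ⟨h.symm, hb, ha⟩⟩
  loopless := ⟨fun a h => G.loopless.irrefl a h.1⟩

/-- Deletion of a set `Z` of vertices: remove every edge incident to a vertex of `Z`. -/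
def delSet {V : Type u} (G : SimpleGraph V) (Z : Set V) : SimpleGraph V where
  Adj a b := G.Adj a b ∧ a ∉ Z ∧ b ∉ Z
  symm := ⟨fun _ _ ⟨h, ha, hb⟩ => ⟨h.symm, hb, ha⟩⟩
  loopless := ⟨fun a h => G.loopless.irrefl a h.1⟩

/-- Star graph on the set `W` with center `c`: edges are exactly the pairs `{c, u}`
for `u ∈ W \ {c}`. -/
def starGraph {V : Type u} (W : Set V) (c : V) : SimpleGraph V :=
  SimpleGraph.fromRel (fun a b => a = c ∧ b ∈ W \ {c})

/-- Complete graph on the set `A`: edges are exactly all pairs of distinct elements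
of `A`. -/
def completeOn {V : Type u} (A : Set V) : SimpleGraph V :=
  SimpleGraph.fromRel (fun a b => a ∈ A ∧ b ∈ A)

/-- Complete bipartite graph on parts `A` and `B`: edges are exactly the pairs
`{a, b}` with `a ∈ A` and `b ∈ B`. -/
def completeBipartiteOn {V : Type u} (A B : Set V) : SimpleGraph V :=
  SimpleGraph.fromRel (fun a b => a ∈ A ∧ b ∈ B)

/-- Binary star graph `S(P1, P2, c1, c2)`: edges are exactly the pairs `{c1, u}`
with `u ∈ P2` together with the pairs `{u, c2}` with `u ∈ P1`. -/
def binaryStar {V : Type u} (P1 P2 : Set V) (c1 c2 : V) : SimpleGraph V :=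
  SimpleGraph.fromRel (fun a b => (a = c1 ∧ b ∈ P2) ∨ (a ∈ P1 ∧ b = c2))

/-- The graph with the single edge `{c1, c2}`. -/
def singleEdge {V : Type u} (c1 c2 : V) : SimpleGraph V :=
  SimpleGraph.fromRel (fun a b => a = c1 ∧ b = c2)

/-!
At the binary star `S = S(P1, P2, c1, c2)` the leaf `w ∈ P2` has the single neighbour `c1`, so
`τ_w` fixes `S`. Complementing at `c1`, whose neighbourhood is `P2`, makes `P2` a clique, and
deleting `c1` leaves this clique together with the edges from `P1 \ {c1}` to `c2`. Complementing
at `w` then empties the clique on `P2 \ {w}`, so that `w` becomes the centre of the star on `P2`: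
one role delegation turns `S` into `S({w} ∪ (P1 \ {c1}), P2 \ {w}, w, c2)`. The theorem is this
step done twice, the second time with the two parts exchanged (`c2` hands its role to `v`).
-/

section RoleDelegation

variable {V : Type u}

@[simp]
lemma localComp_adj {G : SimpleGraph V} {i a b : V} :
    (localComp G i).Adj a b ↔ a ≠ b ∧ (G.Adj a b ↔ ¬(G.Adj i a ∧ G.Adj i b)) := by
  simp only [localComp]
  tauto

@[simp]
lemma delVert_adj {G : SimpleGraph V} {i a b : V} :
    (delVert G i).Adj a b ↔ G.Adj a b ∧ a ≠ i ∧ b ≠ i :=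
  Iff.rfl

lemma localComp_eq_self_of_subsingleton {G : SimpleGraph V} {i : V}
    (h : (G.neighborSet i).Subsingleton) : localComp G i = G := by
  ext a b
  by_cases hab : a = b
  · simp [hab]
  have : ¬(G.Adj i a ∧ G.Adj i b) := fun ⟨ha, hb⟩ => hab (h ha hb)
  simp [hab, this]

lemma binaryStar_comm (P1 P2 : Set V) (c1 c2 : V) :
    binaryStar P1 P2 c1 c2 = binaryStar P2 P1 c2 c1 := by
  ext a b
  simp only [binaryStar, fromRel_adj]
  tauto

variable {P1 P2 : Set V} {c1 c2 w : V}

lemma neighborSet_binaryStar_of_mem_right (hdisj : Disjoint P1 P2) (hc1 : c1 ∈ P1)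
    (hw : w ∈ P2) (hwc2 : w ≠ c2) : (binaryStar P1 P2 c1 c2).neighborSet w = {c1} := by
  ext x
  have := hdisj.notMem_of_mem_right hw
  simp only [mem_neighborSet, binaryStar, fromRel_adj, Set.mem_singleton_iff]
  grind

lemma delVert_localComp_binaryStar (hdisj : Disjoint P1 P2) (hc1 : c1 ∈ P1) (hc2 : c2 ∈ P2) :
    delVert (localComp (binaryStar P1 P2 c1 c2) c1) c1 =
      completeOn P2 ⊔ completeBipartiteOn (P1 \ {c1}) {c2} := by
  ext a b
  have := hdisj.notMem_of_mem_left
  simp only [delVert_adj, localComp_adj, sup_adj,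
    completeOn, completeBipartiteOn, binaryStar, fromRel_adj, Set.mem_sdiff, Set.mem_singleton_iff]
  grind

lemma localComp_completeOn_sup_completeBipartiteOn (hdisj : Disjoint P1 P2) (hc2 : c2 ∈ P2)
    (hw : w ∈ P2) (hwc2 : w ≠ c2) :
    localComp (completeOn P2 ⊔ completeBipartiteOn P1 {c2}) w =
      binaryStar (insert w P1) (P2 \ {w}) w c2 := by
  ext a b
  have := hdisj.notMem_of_mem_left
  simp only [localComp_adj, sup_adj, completeOn, completeBipartiteOn, binaryStar, fromRel_adj,
    Set.mem_sdiff, Set.mem_singleton_iff, Set.mem_insert_iff]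
  grind

/-- The centre `c` hands its role to the vertex `w` (role delegation). -/
def roleDelegation (G : SimpleGraph V) (c w : V) : SimpleGraph V :=
  localComp (delVert (localComp (localComp G w) c) c) w

lemma roleDelegation_binaryStar (hdisj : Disjoint P1 P2) (hc1 : c1 ∈ P1) (hc2 : c2 ∈ P2)
    (hw : w ∈ P2) (hwc2 : w ≠ c2) :
    roleDelegation (binaryStar P1 P2 c1 c2) c1 w =
      binaryStar (insert w (P1 \ {c1})) (P2 \ {w}) w c2 := by
  have hS : localComp (binaryStar P1 P2 c1 c2) w = binaryStar P1 P2 c1 c2 :=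
    localComp_eq_self_of_subsingleton <| by
      rw [neighborSet_binaryStar_of_mem_right hdisj hc1 hw hwc2]
      exact Set.subsingleton_singleton
  rw [roleDelegation, hS,
    delVert_localComp_binaryStar hdisj hc1 hc2,
    localComp_completeOn_sup_completeBipartiteOn (hdisj.mono_left Set.sdiff_subset) hc2 hw hwc2]

end RoleDelegation

/-- Double role delegation, graph level:
with `G̃ = τ_w(τ_{c1}(τ_w(S)) − c1)` and `H = τ_v(τ_{c2}(τ_v(G̃)) − c2)`, `H` is the
binary star graph `S({v} ∪ (P2 \ {c2, w}), {w} ∪ (P1 \ {c1, v}), v, w)`. -/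
theorem stmt_17 {V : Type u} (P1 P2 : Set V) (hdisj : Disjoint P1 P2)
    (c1 c2 : V) (hc1 : c1 ∈ P1) (hc2 : c2 ∈ P2)
    (w : V) (hw : w ∈ P2 \ {c2}) (v : V) (hv : v ∈ P1 \ {c1}) :
    localComp (delVert (localComp (localComp
        (localComp (delVert (localComp
          (localComp (binaryStar P1 P2 c1 c2) w) c1) c1) w) v) c2) c2) v =
      binaryStar ({v} ∪ (P2 \ {c2, w})) ({w} ∪ (P1 \ {c1, v})) v w := by
  obtain ⟨hwP2, hwc2 : w ≠ c2⟩ := hw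
  have hvw : v ≠ w := fun h => hdisj.notMem_of_mem_left hv.1 (h ▸ hwP2)
  have hdisj' : Disjoint (P2 \ {w}) (insert w (P1 \ {c1})) :=
    Set.disjoint_insert_right.2
      ⟨fun h => h.2 rfl, hdisj.symm.mono Set.sdiff_subset Set.sdiff_subset⟩
  change roleDelegation (roleDelegation (binaryStar P1 P2 c1 c2) c1 w) c2 v = _
  rw [roleDelegation_binaryStar hdisj hc1 hc2 hwP2 hwc2, binaryStar_comm,
    roleDelegation_binaryStar hdisj' ⟨hc2, hwc2.symm⟩ (Set.mem_insert w _)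
      (Set.mem_insert_of_mem w hv) hvw]
  congr 1 <;> ext x <;> grind
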